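/- Let A be an abelian category with enough injectives, let B be an abelian category, and let S*, T* : A → B be two cohomological δ-functors satisfying S^i = T^i = 0 for all negative i. Then a morphism of δ-functors φ : S* → T* is an isomorphism if and only if φ_A : S*(A) → T*(A) is an isomorphism for every injective object A of A. -/

import Mathlib

/-!
Dimension shifting. Embed `X` into an injective `I` with cokernel `Q`. In the long exact
sequences `S^i I → S^i Q → S^{i+1} X → S^{i+1} I → S^{i+1} Q` (and likewise for `T`), if `φ^i`
is an isomorphism everywhere and `φ^{i+1}` on injectives, the four lemma first shows that
`φ^{i+1}_X` is a monomorphism for every `X` (in particular for `Q`), and then that it is an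
epimorphism. Induction on `i` starts in negative degrees, where all objects vanish.
-/

open CategoryTheory Limits

universe w v u u'

/-- A cohomological δ-functor from `A` to `B`: a sequence of additive functors
`F i : A ⥤ B` (`i ∈ ℤ`) with connecting morphisms `δ : F i (X₃) ⟶ F (i+1) (X₁)` for
every short exact sequence `0 → X₁ → X₂ → X₃ → 0`, natural in the short exact sequence,
such that the induced long sequence is exact. -/
structure DeltaFunctor (A : Type u) (B : Type u') [Category.{v} A] [Category.{w} B]
    [Abelian A] [Abelian B] where
  /-- the component functors -/
  F : ℤ → A ⥤ B
  additive : ∀ i, (F i).Additive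
  /-- the connecting morphisms -/
  δ : ∀ (S : ShortComplex A), S.ShortExact → ∀ i : ℤ, (F i).obj S.X₃ ⟶ (F (i + 1)).obj S.X₁
  /-- naturality of the connecting morphisms with respect to morphisms of short exact
  sequences -/
  δ_natural : ∀ (S T : ShortComplex A) (hS : S.ShortExact) (hT : T.ShortExact)
      (f : S ⟶ T) (i : ℤ),
      (F i).map f.τ₃ ≫ δ T hT i = δ S hS i ≫ (F (i + 1)).map f.τ₁
  map_comp_zero : ∀ (S : ShortComplex A), S.ShortExact → ∀ i : ℤ,
      (F i).map S.f ≫ (F i).map S.g = 0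
  comp_δ_zero : ∀ (S : ShortComplex A) (hS : S.ShortExact) (i : ℤ),
      (F i).map S.g ≫ δ S hS i = 0
  δ_comp_zero : ∀ (S : ShortComplex A) (hS : S.ShortExact) (i : ℤ),
      δ S hS i ≫ (F (i + 1)).map S.f = 0
  /-- exactness of the long sequence at `F i (X₂)` -/
  exact₂ : ∀ (S : ShortComplex A) (hS : S.ShortExact) (i : ℤ),
      (ShortComplex.mk ((F i).map S.f) ((F i).map S.g) (map_comp_zero S hS i)).Exact
  /-- exactness of the long sequence at `F i (X₃)` -/
  exact₃ : ∀ (S : ShortComplex A) (hS : S.ShortExact) (i : ℤ),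
      (ShortComplex.mk ((F i).map S.g) (δ S hS i) (comp_δ_zero S hS i)).Exact
  /-- exactness of the long sequence at `F (i+1) (X₁)` -/
  exact₁ : ∀ (S : ShortComplex A) (hS : S.ShortExact) (i : ℤ),
      (ShortComplex.mk (δ S hS i) ((F (i + 1)).map S.f) (δ_comp_zero S hS i)).Exact

/-- A morphism of δ-functors: a collection of natural transformations commuting with
the connecting morphisms. -/
structure DeltaFunctorHom {A : Type u} {B : Type u'} [Category.{v} A] [Category.{w} B]
    [Abelian A] [Abelian B] (S T : DeltaFunctor A B) where
  /-- the component natural transformations -/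
  app : ∀ i : ℤ, S.F i ⟶ T.F i
  /-- compatibility with the connecting morphisms -/
  comm : ∀ (C : ShortComplex A) (hC : C.ShortExact) (i : ℤ),
      S.δ C hC i ≫ (app (i + 1)).app C.X₁ = (app i).app C.X₃ ≫ T.δ C hC i


lemma CategoryTheory.ShortComplex.cokernelSequence_shortExact {C : Type*} [Category* C]
    [Abelian C] {X Y : C} (f : X ⟶ Y) [Mono f] : (cokernelSequence f).ShortExact where
  exact := cokernelSequence_exact f
  mono_f := ‹Mono f›

namespace DeltaFunctorHom

variable {A : Type u} {B : Type u'} [Category.{v} A] [Category.{w} B] [Abelian A] [Abelian B]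
  {S T : DeltaFunctor A B} (φ : DeltaFunctorHom S T) (C : ShortComplex A) (i : ℤ)

lemma mono_app_succ_X₁ (hC : C.ShortExact) (h₂ : Epi ((φ.app i).app C.X₂))
    (h₃ : Mono ((φ.app i).app C.X₃))
    (h₂' : Mono ((φ.app (i + 1)).app C.X₂)) : Mono ((φ.app (i + 1)).app C.X₁) :=
  Abelian.mono_of_epi_of_mono_of_mono'
    (R₁ := ComposableArrows.mk₃ ((S.F i).map C.g) (S.δ C hC i) ((S.F (i + 1)).map C.f))
    (R₂ := ComposableArrows.mk₃ ((T.F i).map C.g) (T.δ C hC i) ((T.F (i + 1)).map C.f))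
    (ComposableArrows.homMk₃ _ _ _ _ ((φ.app i).naturality C.g) (φ.comm C hC i)
      ((φ.app (i + 1)).naturality C.f))
    (S.comp_δ_zero C hC i) (S.exact₁ C hC i).exact_toComposableArrows
    (T.exact₃ C hC i).exact_toComposableArrows h₂ h₃ h₂'

lemma epi_app_succ_X₁ (hC : C.ShortExact) (h₃ : Epi ((φ.app i).app C.X₃))
    (h₂ : Epi ((φ.app (i + 1)).app C.X₂))
    (h₃' : Mono ((φ.app (i + 1)).app C.X₃)) : Epi ((φ.app (i + 1)).app C.X₁) :=
  Abelian.epi_of_epi_of_epi_of_mono'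
    (R₁ := ComposableArrows.mk₃ (S.δ C hC i) ((S.F (i + 1)).map C.f) ((S.F (i + 1)).map C.g))
    (R₂ := ComposableArrows.mk₃ (T.δ C hC i) ((T.F (i + 1)).map C.f) ((T.F (i + 1)).map C.g))
    (ComposableArrows.homMk₃ _ _ _ _ (φ.comm C hC i) ((φ.app (i + 1)).naturality C.f)
      ((φ.app (i + 1)).naturality C.g))
    (S.exact₂ C hC (i + 1)).exact_toComposableArrows
    (T.exact₁ C hC i).exact_toComposableArrows (T.map_comp_zero C hC (i + 1)) h₃ h₂ h₃'

lemma isIso_app_succ [EnoughInjectives A] (hi : ∀ X, IsIso ((φ.app i).app X))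
    (hinj : ∀ X, Injective X → IsIso ((φ.app (i + 1)).app X)) (X : A) :
    IsIso ((φ.app (i + 1)).app X) := by
  let C (Y : A) := ShortComplex.cokernelSequence (Injective.ι Y)
  have hC (Y : A) : (C Y).ShortExact := ShortComplex.cokernelSequence_shortExact _
  have hI (Y : A) : IsIso ((φ.app (i + 1)).app (C Y).X₂) :=
    hinj _ (inferInstanceAs (Injective (Injective.under Y)))
  have hmono (Y : A) : Mono ((φ.app (i + 1)).app Y) :=
    φ.mono_app_succ_X₁ (C Y) i (hC Y) inferInstance inferInstance inferInstance
  have hepi : Epi ((φ.app (i + 1)).app X) :=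
    φ.epi_app_succ_X₁ (C X) i (hC X) inferInstance inferInstance (hmono _)
  exact isIso_of_mono_of_epi _

end DeltaFunctorHom

/-- A morphism of cohomological δ-functors vanishing in negative degrees, over an
abelian category with enough injectives, is an isomorphism if and only if it is an
isomorphism on all injective objects. -/
theorem deltaFunctor_isIso_iff_isIso_on_injectives
    {A : Type u} {B : Type u'} [Category.{v} A] [Category.{w} B]
    [Abelian A] [Abelian B] [EnoughInjectives A]
    (S T : DeltaFunctor A B)
    (hS : ∀ i < (0 : ℤ), ∀ X : A, IsZero ((S.F i).obj X))
    (hT : ∀ i < (0 : ℤ), ∀ X : A, IsZero ((T.F i).obj X))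
    (φ : DeltaFunctorHom S T) :
    (∀ (i : ℤ) (X : A), IsIso ((φ.app i).app X)) ↔
      (∀ (i : ℤ) (X : A), Injective X → IsIso ((φ.app i).app X)) := by
  refine ⟨fun h i X _ => h i X, fun hinj i => ?_⟩
  have hneg (j : ℤ) (hj : j < 0) (X : A) : IsIso ((φ.app j).app X) :=
    (hS j hj X).isIso (hT j hj X) _
  induction i using Int.inductionOn' (b := -1) with
  | zero => exact hneg (-1) (by omega)
  | succ j _ ih => exact φ.isIso_app_succ j ih (hinj (j + 1))
  | pred j hj _ => exact hneg (j - 1) (by omega)
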